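/- Fix d ∈ ℕ and m ≥ d. Let G be an Abelian group and P : {0,1}^m → G a multilinear polynomial of degree at most d. Then for any Hamming ball B of radius d in {0,1}^m (centered at an arbitrary point c), there exist integer coefficients α_b for b ∈ B such that P(c) = Σ_{b∈B} α_b · P(b). Moreover P(0^m) can be written as such an integer combination of P over the Hamming ball of radius d around 0^m shifted by any center. -/

import Mathlib

/-- Evaluation of a multilinear polynomial with coefficients `c : Finset (Fin m) → G`
at a Boolean point `a`. -/
def mEval {m : ℕ} {G : Type*} [AddCommGroup G] (c : Finset (Fin m) → G)
    (a : Fin m → Bool) : G :=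
  ∑ I : Finset (Fin m), if ∀ i ∈ I, a i = true then c I else 0

/-!
If `#D > deg P`, the alternating sum of `P` over the `2^#D` points obtained from `a` by flipping
coordinates in `D` vanishes: every monomial of `P` misses some `j ∈ D`, and flipping `j` pairs the
terms off with opposite signs. When `D` lies in the set where `a` differs from the center `ctr`,
every other point of this subcube is strictly closer to `ctr`, so `P a` is an integer combination of
values closer to `ctr`, and induction on the distance ends in the Hamming ball of radius `deg P`.
-/

open Finset Submodule

section Flip

variable {ι G : Type*} [DecidableEq ι] [AddCommGroup G]

def flipOn (a : ι → Bool) (T : Finset ι) : ι → Bool :=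
  fun i => if i ∈ T then !a i else a i

@[simp]
lemma flipOn_empty (a : ι → Bool) : flipOn a ∅ = a := by
  ext i
  simp [flipOn]

lemma flipOn_insert {a : ι → Bool} {T : Finset ι} {j : ι} (hj : j ∉ T) :
    flipOn a (insert j T) = Function.update (flipOn a T) j (!a j) := by
  ext i
  by_cases hij : i = j
  · subst hij
    simp [flipOn]
  · simp [flipOn, hij]

theorem sum_powerset_neg_one_pow_smul_flipOn_eq_zero {f : (ι → Bool) → G} {j : ι}
    (hf : ∀ x b, f (Function.update x j b) = f x) {D : Finset ι} (hj : j ∈ D) (a : ι → Bool) :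
    ∑ T ∈ D.powerset, (-1 : ℤ) ^ #T • f (flipOn a T) = 0 := by
  rw [← insert_erase hj, sum_powerset_insert (notMem_erase j D), ← sum_add_distrib]
  refine sum_eq_zero fun T hT => ?_
  have hjT : j ∉ T := fun h => notMem_erase j D (mem_powerset.1 hT h)
  rw [flipOn_insert hjT, hf, card_insert_of_notMem hjT, pow_succ, mul_neg_one, neg_smul,
    add_neg_cancel]

lemma hammingDist_flipOn_lt [Fintype ι] {a ctr : ι → Bool} {T : Finset ι}
    (hT : T ⊆ ({i | a i ≠ ctr i} : Finset ι)) (hne : T.Nonempty) :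
    hammingDist (flipOn a T) ctr < hammingDist a ctr := by
  have hdiff : ({i | flipOn a T i ≠ ctr i} : Finset ι) = ({i | a i ≠ ctr i} : Finset ι) \ T := by
    ext i
    rw [mem_sdiff, mem_filter_univ, mem_filter_univ, flipOn]
    by_cases hi : i ∈ T
    · have hai := (mem_filter_univ i).1 (hT hi)
      revert hai
      cases a i <;> cases ctr i <;> simp [hi]
    · simp [hi]
  rw [hammingDist, hdiff]
  exact card_lt_card (sdiff_ssubset hT hne)

end Flip

section Interpolation

variable {m d : ℕ} {G : Type*} [AddCommGroup G] {c : Finset (Fin m) → G}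

theorem sum_powerset_neg_one_pow_smul_mEval_flipOn_eq_zero (hdeg : ∀ I, c I ≠ 0 → #I ≤ d)
    {D : Finset (Fin m)} (hD : d < #D) (a : Fin m → Bool) :
    ∑ T ∈ D.powerset, (-1 : ℤ) ^ #T • mEval c (flipOn a T) = 0 := by
  simp only [mEval, smul_sum]
  rw [sum_comm]
  refine sum_eq_zero fun I _ => ?_
  by_cases hI : c I = 0
  · simp [hI]
  obtain ⟨j, hjD, hjI⟩ : ∃ j ∈ D, j ∉ I :=
    not_subset.1 fun h => (card_le_card h).not_gt (hD.trans_le' (hdeg I hI))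
  refine sum_powerset_neg_one_pow_smul_flipOn_eq_zero
    (f := fun x => if ∀ i ∈ I, x i = true then c I else 0) (fun x b => ?_) hjD a
  refine if_congr (forall₂_congr fun i hi => ?_) rfl rfl
  rw [Function.update_of_ne (by rintro rfl; exact hjI hi)]

theorem mEval_mem_span_flipOn (hdeg : ∀ I, c I ≠ 0 → #I ≤ d) {D : Finset (Fin m)} (hD : d < #D)
    (a : Fin m → Bool) :
    mEval c a ∈ span ℤ ((fun T => mEval c (flipOn a T)) '' ↑(D.powerset.erase ∅)) := by
  have h := sum_powerset_neg_one_pow_smul_mEval_flipOn_eq_zero hdeg hD a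
  rw [← add_sum_erase _ _ (empty_mem_powerset D), card_empty, pow_zero, one_smul, flipOn_empty,
    add_eq_zero_iff_eq_neg] at h
  rw [h]
  exact neg_mem (sum_mem fun T hT => smul_mem _ _ (subset_span ⟨T, hT, rfl⟩))

theorem mEval_mem_span_hammingBall (hdeg : ∀ I, c I ≠ 0 → #I ≤ d) (ctr a : Fin m → Bool) :
    mEval c a ∈ span ℤ (mEval c '' ↑(univ.filter fun b => hammingDist b ctr ≤ d)) := by
  induction h : hammingDist a ctr using Nat.strong_induction_on generalizing a with
  | _ n ih =>
  by_cases hball : n ≤ d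
  · exact subset_span ⟨a, by simp [h, hball], rfl⟩
  have hfar : d + 1 ≤ #({i | a i ≠ ctr i} : Finset (Fin m)) := by
    rw [← hammingDist, h]
    omega
  obtain ⟨D, hDsub, hDcard⟩ := exists_subset_card_eq hfar
  refine span_le.2 ?_ (mEval_mem_span_flipOn hdeg (hDcard ▸ lt_add_one d) a)
  rintro _ ⟨T, hT, rfl⟩
  rw [coe_erase, Set.mem_sdiff, mem_coe, mem_powerset, Set.mem_singleton_iff] at hT
  exact ih _ (h ▸ hammingDist_flipOn_lt (hT.1.trans hDsub) (nonempty_iff_ne_empty.2 hT.2)) _ rfl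

end Interpolation

theorem stmt_3_general (d m : ℕ) (G : Type*) [AddCommGroup G]
    (c : Finset (Fin m) → G) (hdeg : ∀ I, c I ≠ 0 → I.card ≤ d)
    (ctr : Fin m → Bool) :
    (∃ α : (Fin m → Bool) → ℤ,
      mEval c ctr =
        ∑ b ∈ Finset.univ.filter (fun b : Fin m → Bool => hammingDist b ctr ≤ d),
          α b • mEval c b) ∧
    (∃ β : (Fin m → Bool) → ℤ,
      mEval c (fun _ => false) =
        ∑ b ∈ Finset.univ.filter (fun b : Fin m → Bool => hammingDist b ctr ≤ d),
          β b • mEval c b) := by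
  have hcomb : ∀ a, ∃ α : (Fin m → Bool) → ℤ, mEval c a =
      ∑ b ∈ Finset.univ.filter (fun b : Fin m → Bool => hammingDist b ctr ≤ d),
        α b • mEval c b := fun a =>
    ((mem_span_image_finset_iff_exists_fun' ℤ).1 (mEval_mem_span_hammingBall hdeg ctr a)).imp
      fun _ h => h.symm
  exact ⟨hcomb ctr, hcomb fun _ => false⟩

/-- A degree-`d` polynomial can be interpolated (with integer coefficients) from its
values on any Hamming ball of radius `d`: both its value at the center `ctr` and its
value at `0^m` are integer combinations of its values on the ball around `ctr`. -/
theorem stmt_3 (d m : ℕ) (hdm : d ≤ m) (G : Type*) [AddCommGroup G]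
    (c : Finset (Fin m) → G) (hdeg : ∀ I, c I ≠ 0 → I.card ≤ d)
    (ctr : Fin m → Bool) :
    (∃ α : (Fin m → Bool) → ℤ,
      mEval c ctr =
        ∑ b ∈ Finset.univ.filter (fun b : Fin m → Bool => hammingDist b ctr ≤ d),
          α b • mEval c b) ∧
    (∃ β : (Fin m → Bool) → ℤ,
      mEval c (fun _ => false) =
        ∑ b ∈ Finset.univ.filter (fun b : Fin m → Bool => hammingDist b ctr ≤ d),
          β b • mEval c b) :=
  stmt_3_general d m G c hdeg ctr
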